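/- arXiv:2308.12808 — 2 statements merged into one kernel-verified Lean document; each statement's English description precedes it below -/
import Mathlib

section
/- Define μ(a, b, f, c) := (n + 2 + a)·a/(a+1) − (1 + f + c)/(a+1), where b = a − (1 + f + c), a ≥ 1, f ≥ 0, c ≥ 0 integers, a ≤ m. Then (n − b)·a/(a+1) + a + b = μ(a, b, f, c), and for fixed n ≥ 1, μ(a, b, f, c) is maximized over all valid (a, f, c) with a ≤ m exactly when a = m and f = c = 0. -/
/-- With `b = a - (1 + f + c)`, the mean order `(n-b)·a/(a+1) + a + b` equals
`(n+2+a)·a/(a+1) - (1+f+c)/(a+1)`, and over all valid `(a, f, c)` with `1 ≤ a ≤ m`,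
this quantity is maximized exactly when `a = m` and `f = c = 0`, with maximum value
`(n+2+m)·m/(m+1) - 1/(m+1)`. -/
theorem mu_formula_and_max (m n : ℕ) (hm : 1 ≤ m) (hmn : m ≤ n) :
    (∀ a f c : ℕ, 1 ≤ a → a ≤ m → 1 + f + c ≤ a →
      ((n : ℝ) - ((a : ℝ) - 1 - f - c)) * a / (a + 1) + a + ((a : ℝ) - 1 - f - c)
        = ((n : ℝ) + 2 + a) * a / (a + 1) - (1 + (f : ℝ) + c) / (a + 1)) ∧
    (∀ a f c : ℕ, 1 ≤ a → a ≤ m → 1 + f + c ≤ a →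
      ((n : ℝ) + 2 + a) * a / (a + 1) - (1 + (f : ℝ) + c) / (a + 1)
        ≤ ((n : ℝ) + 2 + m) * m / (m + 1) - 1 / (m + 1) ∧
      (((n : ℝ) + 2 + a) * a / (a + 1) - (1 + (f : ℝ) + c) / (a + 1)
          = ((n : ℝ) + 2 + m) * m / (m + 1) - 1 / (m + 1) ↔ a = m ∧ f = 0 ∧ c = 0)) := by
  have hm1 : (0:ℝ) < (m:ℝ) + 1 := by positivity
  constructor
  · intro a f c ha ham htc
    have ha1 : (0:ℝ) ≠ (a:ℝ) + 1 := by positivity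
    field_simp
    ring
  · intro a f c ha ham htc
    have ha1 : (0:ℝ) < (a:ℝ) + 1 := by positivity
    have hAm : (a:ℝ) ≤ m := by exact_mod_cast ham
    have hmn' : (m:ℝ) ≤ n := by exact_mod_cast hmn
    have ha' : (1:ℝ) ≤ a := by exact_mod_cast ha
    have hf : (0:ℝ) ≤ f := Nat.cast_nonneg f
    have hc : (0:ℝ) ≤ c := Nat.cast_nonneg c
    have hfac : (0:ℝ) < (n:ℝ) + 3 + m*a + m + a := by positivity
    have t1 : (0:ℝ) ≤ ((m:ℝ) - a) * ((n:ℝ) + 3 + m*a + m + a) :=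
      mul_nonneg (by linarith) hfac.le
    have t2 : (0:ℝ) ≤ ((f:ℝ) + c) * ((m:ℝ) + 1) :=
      mul_nonneg (by linarith) hm1.le
    have key : ((n : ℝ) + 2 + a) * a / (a + 1) - (1 + (f : ℝ) + c) / (a + 1)
        = (((n : ℝ) + 2 + a) * a - (1 + (f : ℝ) + c)) / (a + 1) := by
      rw [div_sub_div_same]
    have key2 : ((n : ℝ) + 2 + m) * m / (m + 1) - 1 / (m + 1)
        = (((n : ℝ) + 2 + m) * m - 1) / (m + 1) := by
      rw [div_sub_div_same]
    constructor
    · rw [key, key2, div_le_div_iff₀ ha1 hm1]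
      nlinarith [t1, t2]
    · constructor
      · intro heq
        rw [key, key2, div_eq_div_iff ha1.ne' hm1.ne'] at heq
        have hsum : ((m:ℝ) - a) * ((n:ℝ) + 3 + m*a + m + a)
            + ((f:ℝ) + c) * ((m:ℝ) + 1) = 0 := by linear_combination -heq
        have e1 : ((m:ℝ) - a) * ((n:ℝ) + 3 + m*a + m + a) = 0 := by linarith
        have e2 : ((f:ℝ) + c) * ((m:ℝ) + 1) = 0 := by linarith
        have ham' : (m:ℝ) = a := by
          rcases mul_eq_zero.mp e1 with h | h
          · linarith
          · linarith
        have hfc : (f:ℝ) + c = 0 := by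
          rcases mul_eq_zero.mp e2 with h | h
          · exact h
          · linarith
        have hf0 : (f:ℝ) = 0 := by linarith
        have hc0 : (c:ℝ) = 0 := by linarith
        refine ⟨?_, ?_, ?_⟩
        · exact_mod_cast ham'.symm
        · exact_mod_cast hf0
        · exact_mod_cast hc0
      · rintro ⟨rfl, rfl, rfl⟩
        norm_num
end

section
/- For every tree T of order n ≥ 1, the mean subtree order satisfies μ(T) ≥ (n+2)/3, with equality if and only if T is a path. -/
open SimpleGraph Set

/-- A subtree of a graph `G` is a nonempty, connected, acyclic subgraph of `G`. -/
def SimpleGraph.Subgraph.IsSubtree {V : Type*} {G : SimpleGraph V} (H : G.Subgraph) : Prop :=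
  H.verts.Nonempty ∧ H.coe.Connected ∧ H.coe.IsAcyclic

/-- The mean subtree order of a graph: the average number of vertices of a subtree. -/
noncomputable def SimpleGraph.meanSubtreeOrder {V : Type*} (G : SimpleGraph V) : ℝ :=
  (∑ᶠ H ∈ {H : G.Subgraph | H.IsSubtree}, (H.verts.ncard : ℝ)) /
    ({H : G.Subgraph | H.IsSubtree}.ncard : ℝ)

/-!
Write `N(S)` for the number of connected subsets of a vertex set `S` of a forest, `Σ(S)` for
the sum of their sizes, and `N_r(S)`, `Σ_r(S)` for the same quantities restricted to the
connected subsets containing a root `r ∈ S`. Subtrees of a forest are exactly the subgraphs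
induced by connected vertex sets, so `μ(T) = Σ(V) / N(V)`.

Cutting a connected `S` along an edge `r w` into `A ∋ r` and `B ∋ w` gives
`N_r(S) = N_r(A) (1 + N_w(B))`, `N(S) = N(A) + N(B) + N_r(A) N_w(B)` and the analogous formulas
for the sums. Induction over such cuts yields `N_r(S) ≥ |S|`, `2 Σ_r(S) ≥ (|S| + 1) N_r(S)`,
`Σ_r(S) ≥ N(S)` and finally `3 Σ(S) ≥ (|S| + 2) N(S)`. Cutting at a vertex of degree at least
three makes `N_r(A) > |A|`, so the last inequality is then strict; if all degrees are at most
two, every estimate is an equality, and the tree is a path numbered by the distance from a leaf.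
-/

namespace SimpleGraph

open Finset

open scoped Classical

variable {V : Type*} {G : SimpleGraph V} {S T A B P Q : Finset V} {r w : V}

def IsConnectedSet (G : SimpleGraph V) (S : Finset V) : Prop :=
  S.Nonempty ∧ ∀ x ∈ S, ∀ y ∈ S, ∃ p : G.Walk x y, ∀ z ∈ p.support, z ∈ S

namespace IsConnectedSet

lemma singleton (G : SimpleGraph V) (r : V) : G.IsConnectedSet {r} := by
  refine ⟨singleton_nonempty r, ?_⟩
  rintro x hx y hy
  rw [Finset.mem_singleton] at hx hy
  subst hx hy
  exact ⟨.nil, by simp⟩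

lemma of_forall_walk_from (hr : r ∈ S)
    (h : ∀ y ∈ S, ∃ p : G.Walk r y, ∀ z ∈ p.support, z ∈ S) : G.IsConnectedSet S := by
  refine ⟨⟨r, hr⟩, fun x hx y hy => ?_⟩
  obtain ⟨p, hp⟩ := h x hx
  obtain ⟨q, hq⟩ := h y hy
  refine ⟨p.reverse.append q, fun z hz => ?_⟩
  rw [Walk.mem_support_append_iff, Walk.support_reverse, List.mem_reverse] at hz
  exact hz.elim (hp z) (hq z)

lemma union_of_adj (hP : G.IsConnectedSet P) (hQ : G.IsConnectedSet Q) (hr : r ∈ P) (hw : w ∈ Q)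
    (hadj : G.Adj r w) : G.IsConnectedSet (P ∪ Q) := by
  refine of_forall_walk_from (mem_union_left _ hr) fun y hy => ?_
  rcases mem_union.mp hy with hy | hy
  · obtain ⟨p, hp⟩ := hP.2 r hr y hy
    exact ⟨p, fun z hz => mem_union_left _ (hp z hz)⟩
  · obtain ⟨p, hp⟩ := hQ.2 w hw y hy
    refine ⟨.cons hadj p, fun z hz => ?_⟩
    rcases (Walk.mem_support_iff _).mp hz with rfl | hz
    exacts [mem_union_left _ hr, mem_union_right _ (hp z hz)]

lemma exists_adj (hS : G.IsConnectedSet S) (hr : r ∈ S) (h : 2 ≤ #S) :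
    ∃ w ∈ S, G.Adj r w := by
  obtain ⟨y, hy, hne⟩ := exists_mem_ne h r
  obtain ⟨p, hp⟩ := hS.2 r hr y hy
  cases p with
  | nil => exact absurd rfl hne
  | cons hadj q => exact ⟨_, hp _ (by simp), hadj⟩

end IsConnectedSet

lemma isConnectedSet_univ [Fintype V] (hG : G.Connected) : G.IsConnectedSet univ :=
  ⟨univ_nonempty_iff.mpr hG.nonempty, fun x _ y _ =>
    ⟨(hG.preconnected x y).some, fun z _ => mem_univ z⟩⟩

noncomputable def degreeIn (G : SimpleGraph V) (S : Finset V) (x : V) : ℕ :=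
  #{y ∈ S | G.Adj x y}

lemma degreeIn_mono (h : S ⊆ T) (x : V) : G.degreeIn S x ≤ G.degreeIn T x :=
  card_le_card (filter_subset_filter _ h)

lemma degreeIn_lt_card (hr : r ∈ S) : G.degreeIn S r < #S :=
  card_lt_card <| (Finset.ssubset_iff_of_subset (filter_subset _ _)).mpr
    ⟨r, hr, fun h => G.loopless.irrefl r (Finset.mem_filter.mp h).2⟩

lemma degreeIn_univ [Fintype V] (x : V) : G.degreeIn univ x = G.degree x := by
  rw [degreeIn, ← card_neighborFinset_eq_degree, neighborFinset_eq_filter]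

lemma IsConnectedSet.eq_singleton_of_degreeIn_eq_zero (hS : G.IsConnectedSet S) (hr : r ∈ S)
    (h0 : G.degreeIn S r = 0) : S = {r} := by
  refine eq_singleton_iff_unique_mem.mpr ⟨hr, fun x hx => ?_⟩
  by_contra hxr
  obtain ⟨w, hw, hadj⟩ := hS.exists_adj hr (one_lt_card.mpr ⟨x, hx, r, hr, hxr⟩)
  exact card_ne_zero.mpr ⟨w, Finset.mem_filter.mpr ⟨hw, hadj⟩⟩ h0

structure IsEdgeSplit (G : SimpleGraph V) (S A B : Finset V) (r w : V) : Prop where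
  isConnectedSet : G.IsConnectedSet S
  union_eq : A ∪ B = S
  disjoint : Disjoint A B
  left_mem : r ∈ A
  right_mem : w ∈ B
  adj : G.Adj r w
  eq_of_adj : ∀ a ∈ A, ∀ b ∈ B, G.Adj a b → a = r ∧ b = w

namespace IsEdgeSplit

variable (h : G.IsEdgeSplit S A B r w)
include h

lemma symm : G.IsEdgeSplit S B A w r where
  isConnectedSet := h.isConnectedSet
  union_eq := by rw [Finset.union_comm, h.union_eq]
  disjoint := h.disjoint.symm
  left_mem := h.right_mem
  right_mem := h.left_mem
  adj := h.adj.symm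
  eq_of_adj b hb a ha hba := (h.eq_of_adj a ha b hb hba.symm).symm

lemma left_subset : A ⊆ S := h.union_eq ▸ subset_union_left

lemma card_add_card : #A + #B = #S := by
  rw [← card_union_of_disjoint h.disjoint, h.union_eq]

lemma mem_right_of_notMem_left {z : V} (hz : z ∈ S) (hzA : z ∉ A) : z ∈ B := by
  rw [← h.union_eq, Finset.mem_union] at hz
  exact hz.resolve_left hzA

lemma notMem_right_of_mem_left {z : V} (hz : z ∈ A) : z ∉ B :=
  Finset.disjoint_left.mp h.disjoint hz

lemma mem_of_mem_left_of_notMem_left (hT : G.IsConnectedSet T) (hTS : T ⊆ S) {x y : V}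
    (hx : x ∈ T) (hxA : x ∈ A) (hy : y ∈ T) (hyA : y ∉ A) : r ∈ T ∧ w ∈ T := by
  obtain ⟨p, hp⟩ := hT.2 x hx y hy
  obtain ⟨d, hd, hdA, hdA'⟩ := p.exists_boundary_dart A hxA hyA
  have hsupp := hp _ (p.dart_snd_mem_support_of_mem_darts hd)
  obtain ⟨rfl, rfl⟩ :=
    h.eq_of_adj _ hdA _ (h.mem_right_of_notMem_left (hTS hsupp) hdA') d.adj
  exact ⟨hp _ (p.dart_fst_mem_support_of_mem_darts hd), hsupp⟩

lemma support_subset_left_of_isPath {x y : V} {p : G.Walk x y} (hp : p.IsPath) (hx : x ∈ A)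
    (hy : y ∈ A) (hpS : ∀ z ∈ p.support, z ∈ S) : ∀ z ∈ p.support, z ∈ A := by
  -- leaving `A` and coming back, the path would cross the edge `r w` twice
  intro z hz
  by_contra hzA
  obtain ⟨q, q', -, -, rfl⟩ := hp.mem_support_iff_exists_append.mp hz
  have hrq : r ∈ q.support := by
    obtain ⟨d, hd, hdA, hdA'⟩ := q.exists_boundary_dart A hx hzA
    have hdS := hpS _
      (Walk.support_subset_support_append_left q q' (q.dart_snd_mem_support_of_mem_darts hd))
    rw [← (h.eq_of_adj _ hdA _ (h.mem_right_of_notMem_left hdS hdA') d.adj).1]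
    exact q.dart_fst_mem_support_of_mem_darts hd
  have hrq' : r ∈ q'.support := by
    obtain ⟨d, hd, hdA, hdA'⟩ := q'.reverse.exists_boundary_dart A hy hzA
    have hds : d.snd ∈ q'.support := by
      simpa using q'.reverse.dart_snd_mem_support_of_mem_darts hd
    have hdS := hpS _ (Walk.support_subset_support_append_right q q' hds)
    rw [← (h.eq_of_adj _ hdA _ (h.mem_right_of_notMem_left hdS hdA') d.adj).1]
    simpa using q'.reverse.dart_fst_mem_support_of_mem_darts hd
  exact hp.ne_of_mem_support_of_append (fun hrz => hzA (hrz ▸ h.left_mem)) hrq hrq' rfl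

lemma isConnectedSet_inter_left (hT : G.IsConnectedSet T) (hTS : T ⊆ S) (hr : r ∈ T) :
    G.IsConnectedSet (T ∩ A) := by
  refine IsConnectedSet.of_forall_walk_from (mem_inter.mpr ⟨hr, h.left_mem⟩) fun y hy => ?_
  obtain ⟨p, hp⟩ := hT.2 r hr y (mem_inter.mp hy).1
  have hpT : ∀ z ∈ p.toPath.val.support, z ∈ T := fun z hz =>
    hp z (p.support_toPath_subset_support hz)
  refine ⟨p.toPath, fun z hz => mem_inter.mpr ⟨hpT z hz, ?_⟩⟩
  exact h.support_subset_left_of_isPath p.toPath.prop h.left_mem (mem_inter.mp hy).2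
    (fun z hz => hTS (hpT z hz)) z hz

lemma isConnectedSet_left : G.IsConnectedSet A := by
  simpa [Finset.inter_eq_right.mpr h.left_subset] using
    h.isConnectedSet_inter_left h.isConnectedSet subset_rfl (h.left_subset h.left_mem)

lemma degreeIn_left_add_one : G.degreeIn A r + 1 = G.degreeIn S r := by
  have : {y ∈ S | G.Adj r y} = insert w {y ∈ A | G.Adj r y} := by
    ext y
    simp only [Finset.mem_filter, Finset.mem_insert]
    constructor
    · rintro ⟨hy, hry⟩
      by_cases hyA : y ∈ A
      · exact .inr ⟨hyA, hry⟩
      · exact .inl (h.eq_of_adj r h.left_mem y (h.mem_right_of_notMem_left hy hyA) hry).2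
    · rintro (rfl | ⟨hy, hry⟩)
      exacts [⟨h.symm.left_subset h.right_mem, h.adj⟩, ⟨h.left_subset hy, hry⟩]
  rw [degreeIn, degreeIn, this, card_insert_of_notMem]
  exact fun hw => h.notMem_right_of_mem_left (Finset.mem_filter.mp hw).1 h.right_mem

end IsEdgeSplit

lemma exists_isEdgeSplit (hacyc : G.IsAcyclic) (hS : G.IsConnectedSet S) (hr : r ∈ S)
    (h2 : 2 ≤ #S) : ∃ A B w, G.IsEdgeSplit S A B r w := by
  obtain ⟨w, hw, hadj⟩ := hS.exists_adj hr h2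
  set B := {x ∈ S | ∃ p : G.Walk w x, (∀ z ∈ p.support, z ∈ S) ∧ r ∉ p.support}
  have hrB : r ∉ B := fun hrB => by
    obtain ⟨-, p, -, hrp⟩ := Finset.mem_filter.mp hrB
    exact hrp p.end_mem_support
  have hwB : w ∈ B :=
    Finset.mem_filter.mpr ⟨hw, .nil, by simpa using hw, by simpa using hadj.ne⟩
  refine ⟨S \ B, B, w, hS, sdiff_union_of_subset (filter_subset _ _), sdiff_disjoint,
    mem_sdiff.mpr ⟨hr, hrB⟩, hwB, hadj, fun a ha b hb hab => ?_⟩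
  obtain ⟨haS, haB⟩ := mem_sdiff.mp ha
  obtain ⟨hbS, p, hpS, hrp⟩ := Finset.mem_filter.mp hb
  obtain rfl : a = r := by
    by_contra hne
    refine haB (Finset.mem_filter.mpr ⟨haS, p.concat hab.symm, fun z hz => ?_, fun hz => ?_⟩)
    · simp only [Walk.support_concat, List.mem_append, List.mem_singleton] at hz
      exact hz.elim (hpS z) (· ▸ haS)
    · simp only [Walk.support_concat, List.mem_append, List.mem_singleton] at hz
      exact hz.elim hrp (fun h => hne h.symm)
  have hpath : (Walk.cons hadj p.toPath.val).IsPath :=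
    p.toPath.prop.cons fun h => hrp (p.support_toPath_subset_support h)
  exact ⟨rfl, by simpa using hacyc.eq_snd_of_adj_start hpath hab (by simp)⟩

@[elab_as_elim]
theorem IsConnectedSet.induction_on_split (hacyc : G.IsAcyclic) {P : Finset V → V → Prop}
    (singleton : ∀ r, P {r} r)
    (split : ∀ S A B r w, G.IsEdgeSplit S A B r w → P A r → P B w → P S r)
    {S : Finset V} {r : V} (hS : G.IsConnectedSet S) (hr : r ∈ S) : P S r := by
  induction hn : #S using Nat.strong_induction_on generalizing S r with
  | _ n ih =>
  by_cases h2 : 2 ≤ #S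
  · obtain ⟨A, B, w, h⟩ := exists_isEdgeSplit hacyc hS hr h2
    have hA := card_pos.mpr ⟨r, h.left_mem⟩
    have hB := card_pos.mpr ⟨w, h.right_mem⟩
    have hAB := h.card_add_card
    exact split S A B r w h (ih #A (by omega) h.isConnectedSet_left h.left_mem rfl)
      (ih #B (by omega) h.symm.isConnectedSet_left h.right_mem rfl)
  · obtain rfl : S = {r} := eq_singleton_iff_unique_mem.mpr
      ⟨hr, fun x hx => card_le_one.mp (by omega) x hx r hr⟩
    exact singleton r

noncomputable def subtrees (G : SimpleGraph V) (S : Finset V) : Finset (Finset V) :=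
  {T ∈ S.powerset | G.IsConnectedSet T}

noncomputable def rootedSubtrees (G : SimpleGraph V) (S : Finset V) (r : V) :
    Finset (Finset V) :=
  {T ∈ G.subtrees S | r ∈ T}

lemma mem_subtrees : T ∈ G.subtrees S ↔ T ⊆ S ∧ G.IsConnectedSet T := by
  simp [subtrees]

lemma mem_rootedSubtrees :
    T ∈ G.rootedSubtrees S r ↔ T ⊆ S ∧ G.IsConnectedSet T ∧ r ∈ T := by
  simp [rootedSubtrees, mem_subtrees, and_assoc]

lemma subtrees_singleton (r : V) : G.subtrees {r} = {{r}} := by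
  ext T
  simp only [mem_subtrees, Finset.mem_singleton, Finset.subset_singleton_iff]
  constructor
  · rintro ⟨rfl | rfl, hT⟩
    exacts [absurd hT.1 (by simp), rfl]
  · rintro rfl
    exact ⟨.inr rfl, .singleton G r⟩

lemma rootedSubtrees_singleton (r : V) : G.rootedSubtrees {r} r = {{r}} := by
  rw [rootedSubtrees, subtrees_singleton]
  simp

lemma card_rootedSubtrees_le_sum_card :
    #(G.rootedSubtrees S r) ≤ ∑ T ∈ G.rootedSubtrees S r, #T :=
  card_eq_sum_ones (G.rootedSubtrees S r) ▸ sum_le_sum fun _ hT =>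
    card_pos.mpr ⟨r, (mem_rootedSubtrees.mp hT).2.2⟩

namespace IsEdgeSplit

variable (h : G.IsEdgeSplit S A B r w)
include h

lemma union_inter_left (hP : P ⊆ A) (hQ : Q ⊆ B) : (P ∪ Q) ∩ A = P := by
  rw [Finset.union_inter_distrib_right, Finset.inter_eq_left.mpr hP,
    disjoint_iff_inter_eq_empty.mp (h.disjoint.symm.mono_left hQ), Finset.union_empty]

lemma inter_left_union_inter_right (hTS : T ⊆ S) : T ∩ A ∪ T ∩ B = T := by
  rw [← Finset.inter_union_distrib_left, h.union_eq, Finset.inter_eq_left.mpr hTS]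

lemma rootedSubtrees_filter_notMem :
    {T ∈ G.rootedSubtrees S r | w ∉ T} = G.rootedSubtrees A r := by
  ext T
  simp only [Finset.mem_filter, mem_rootedSubtrees]
  constructor
  · rintro ⟨⟨hTS, hT, hrT⟩, hwT⟩
    refine ⟨fun y hy => ?_, hT, hrT⟩
    by_contra hyA
    exact hwT (h.mem_of_mem_left_of_notMem_left hT hTS hrT h.left_mem hy hyA).2
  · rintro ⟨hTA, hT, hrT⟩
    exact ⟨⟨hTA.trans h.left_subset, hT, hrT⟩,
      fun hwT => h.notMem_right_of_mem_left (hTA hwT) h.right_mem⟩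

lemma subtrees_filter_notMem :
    {T ∈ G.subtrees S | r ∉ T} = {T ∈ G.subtrees A | r ∉ T} ∪ G.subtrees B := by
  ext T
  simp only [Finset.mem_filter, Finset.mem_union, mem_subtrees]
  constructor
  · rintro ⟨⟨hTS, hT⟩, hrT⟩
    by_cases hTA : T ⊆ A
    · exact .inl ⟨⟨hTA, hT⟩, hrT⟩
    obtain ⟨y, hy, hyA⟩ := Finset.not_subset.mp hTA
    refine .inr ⟨fun x hx => h.mem_right_of_notMem_left (hTS hx) fun hxA => ?_, hT⟩
    exact hrT (h.mem_of_mem_left_of_notMem_left hT hTS hx hxA hy hyA).1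
  · rintro (⟨⟨hTA, hT⟩, hrT⟩ | ⟨hTB, hT⟩)
    · exact ⟨⟨hTA.trans h.left_subset, hT⟩, hrT⟩
    · exact ⟨⟨hTB.trans h.symm.left_subset, hT⟩,
        fun hrT => h.notMem_right_of_mem_left h.left_mem (hTB hrT)⟩

variable {M : Type*} [AddCommMonoid M] (f : Finset V → M)

lemma sum_rootedSubtrees :
    ∑ T ∈ G.rootedSubtrees S r, f T = ∑ T ∈ G.rootedSubtrees A r, f T +
      ∑ p ∈ G.rootedSubtrees A r ×ˢ G.rootedSubtrees B w, f (p.1 ∪ p.2) := by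
  rw [← sum_filter_not_add_sum_filter _ (w ∈ ·), h.rootedSubtrees_filter_notMem]
  congr 1
  refine sum_nbij' (fun T => (T ∩ A, T ∩ B)) (fun p => p.1 ∪ p.2) ?_ ?_ ?_ ?_ ?_
  · intro T hT
    obtain ⟨⟨hTS, hT, hrT⟩, hwT⟩ := by
      simpa only [Finset.mem_filter, mem_rootedSubtrees] using hT
    simp only [mem_product, mem_rootedSubtrees, Finset.mem_inter]
    exact ⟨⟨inter_subset_right, h.isConnectedSet_inter_left hT hTS hrT, hrT, h.left_mem⟩,
      ⟨inter_subset_right, h.symm.isConnectedSet_inter_left hT hTS hwT, hwT, h.right_mem⟩⟩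
  · rintro ⟨P, Q⟩ hPQ
    obtain ⟨⟨hPA, hP, hrP⟩, hQB, hQ, hwQ⟩ := by
      simpa only [mem_product, mem_rootedSubtrees] using hPQ
    simp only [Finset.mem_filter, mem_rootedSubtrees]
    exact ⟨⟨h.union_eq ▸ union_subset_union hPA hQB, hP.union_of_adj hQ hrP hwQ h.adj,
      mem_union_left _ hrP⟩, mem_union_right _ hwQ⟩
  · intro T hT
    exact h.inter_left_union_inter_right (mem_rootedSubtrees.mp (Finset.mem_filter.mp hT).1).1
  · rintro ⟨P, Q⟩ hPQ
    obtain ⟨hPA, -⟩ := mem_rootedSubtrees.mp (mem_product.mp hPQ).1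
    obtain ⟨hQB, -⟩ := mem_rootedSubtrees.mp (mem_product.mp hPQ).2
    rw [h.union_inter_left hPA hQB, Finset.union_comm, h.symm.union_inter_left hQB hPA]
  · intro T hT
    rw [h.inter_left_union_inter_right (mem_rootedSubtrees.mp (Finset.mem_filter.mp hT).1).1]

lemma sum_subtrees :
    ∑ T ∈ G.subtrees S, f T = ∑ T ∈ G.subtrees A, f T + ∑ T ∈ G.subtrees B, f T +
      ∑ p ∈ G.rootedSubtrees A r ×ˢ G.rootedSubtrees B w, f (p.1 ∪ p.2) := by
  have hdisj : Disjoint {T ∈ G.subtrees A | r ∉ T} (G.subtrees B) := by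
    refine Finset.disjoint_left.mpr fun T hTA hTB => ?_
    obtain ⟨x, hx⟩ := (mem_subtrees.mp hTB).2.1
    exact h.notMem_right_of_mem_left ((mem_subtrees.mp (Finset.mem_filter.mp hTA).1).1 hx)
      ((mem_subtrees.mp hTB).1 hx)
  rw [← sum_filter_add_sum_filter_not (G.subtrees S) (r ∈ ·), ← rootedSubtrees,
    h.sum_rootedSubtrees, h.subtrees_filter_notMem, sum_union hdisj,
    ← sum_filter_add_sum_filter_not (G.subtrees A) (r ∈ ·), ← rootedSubtrees]
  abel

lemma sum_card_union_product :
    ∑ p ∈ G.rootedSubtrees A r ×ˢ G.rootedSubtrees B w, #(p.1 ∪ p.2) =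
      (∑ P ∈ G.rootedSubtrees A r, #P) * #(G.rootedSubtrees B w) +
        #(G.rootedSubtrees A r) * ∑ Q ∈ G.rootedSubtrees B w, #Q := by
  rw [sum_congr rfl fun p hp => card_union_of_disjoint <| h.disjoint.mono
    (mem_rootedSubtrees.mp (mem_product.mp hp).1).1 (mem_rootedSubtrees.mp (mem_product.mp hp).2).1,
    sum_add_distrib, sum_product, sum_product_right]
  simp [sum_const, smul_eq_mul, sum_mul, mul_sum, mul_comm]

lemma card_rootedSubtrees :
    #(G.rootedSubtrees S r) = #(G.rootedSubtrees A r) * (1 + #(G.rootedSubtrees B w)) := by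
  have := h.sum_rootedSubtrees fun _ => 1
  simp only [sum_const, card_product, smul_eq_mul, mul_one] at this
  rw [this]
  ring

lemma sum_card_rootedSubtrees :
    ∑ T ∈ G.rootedSubtrees S r, #T =
      (∑ P ∈ G.rootedSubtrees A r, #P) * (1 + #(G.rootedSubtrees B w)) +
        #(G.rootedSubtrees A r) * ∑ Q ∈ G.rootedSubtrees B w, #Q := by
  rw [h.sum_rootedSubtrees, h.sum_card_union_product]
  ring

lemma card_subtrees : #(G.subtrees S) = #(G.subtrees A) + #(G.subtrees B) +
    #(G.rootedSubtrees A r) * #(G.rootedSubtrees B w) := by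
  have := h.sum_subtrees fun _ => 1
  simpa only [sum_const, card_product, smul_eq_mul, mul_one] using this

lemma sum_card_subtrees : ∑ T ∈ G.subtrees S, #T =
    ∑ T ∈ G.subtrees A, #T + ∑ T ∈ G.subtrees B, #T +
      ((∑ P ∈ G.rootedSubtrees A r, #P) * #(G.rootedSubtrees B w) +
        #(G.rootedSubtrees A r) * ∑ Q ∈ G.rootedSubtrees B w, #Q) := by
  rw [h.sum_subtrees, h.sum_card_union_product]

end IsEdgeSplit

section Acyclic

variable (hacyc : G.IsAcyclic)
include hacyc

lemma card_le_card_rootedSubtrees (hS : G.IsConnectedSet S) (hr : r ∈ S) :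
    #S ≤ #(G.rootedSubtrees S r) := by
  refine IsConnectedSet.induction_on_split hacyc (fun r => ?_) (fun S A B r w h ihA ihB => ?_) hS hr
  · simp [rootedSubtrees_singleton]
  · have hA := card_pos.mpr ⟨r, h.left_mem⟩
    rw [← h.card_add_card, h.card_rootedSubtrees]
    calc #A + #B ≤ #A * (1 + #B) := by nlinarith
      _ ≤ _ := by gcongr

lemma card_lt_card_rootedSubtrees (hS : G.IsConnectedSet S) (hr : r ∈ S)
    (hdeg : 2 ≤ G.degreeIn S r) : #S < #(G.rootedSubtrees S r) := by
  obtain ⟨A, B, w, h⟩ := exists_isEdgeSplit hacyc hS hr (hdeg.trans (degreeIn_lt_card hr).le)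
  have hA : 2 ≤ #A := by
    have := h.degreeIn_left_add_one
    have := degreeIn_lt_card (G := G) h.left_mem
    omega
  have hB := card_le_card_rootedSubtrees hacyc h.symm.isConnectedSet_left h.right_mem
  rw [← h.card_add_card, h.card_rootedSubtrees]
  calc #A + #B < #A * (1 + #B) := by nlinarith [card_pos.mpr ⟨w, h.right_mem⟩]
    _ ≤ _ := by gcongr; exact card_le_card_rootedSubtrees hacyc h.isConnectedSet_left h.left_mem

lemma card_subtrees_le_sum_card_rootedSubtrees (hS : G.IsConnectedSet S) (hr : r ∈ S) :
    #(G.subtrees S) ≤ ∑ T ∈ G.rootedSubtrees S r, #T := by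
  refine IsConnectedSet.induction_on_split hacyc (fun r => ?_) (fun S A B r w h ihA ihB => ?_) hS hr
  · simp [subtrees_singleton, rootedSubtrees_singleton]
  · have hNA : 1 ≤ #(G.rootedSubtrees A r) := card_pos.mpr ⟨A, mem_rootedSubtrees.mpr
      ⟨subset_rfl, h.isConnectedSet_left, h.left_mem⟩⟩
    have hNA_le := card_rootedSubtrees_le_sum_card (G := G) (S := A) (r := r)
    rw [h.card_subtrees, h.sum_card_rootedSubtrees]
    nlinarith

lemma card_add_one_mul_card_rootedSubtrees_le (hS : G.IsConnectedSet S) (hr : r ∈ S) :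
    (#S + 1) * #(G.rootedSubtrees S r) ≤ 2 * ∑ T ∈ G.rootedSubtrees S r, #T := by
  refine IsConnectedSet.induction_on_split hacyc (fun r => ?_) (fun S A B r w h ihA ihB => ?_) hS hr
  · simp [rootedSubtrees_singleton]
  · have hB := card_le_card_rootedSubtrees hacyc h.symm.isConnectedSet_left h.right_mem
    rw [← h.card_add_card, h.card_rootedSubtrees, h.sum_card_rootedSubtrees]
    nlinarith

lemma IsEdgeSplit.card_add_two_mul_card_subtrees_add_le (h : G.IsEdgeSplit S A B r w)
    (hA : (#A + 2) * #(G.subtrees A) ≤ 3 * ∑ T ∈ G.subtrees A, #T)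
    (hB : (#B + 2) * #(G.subtrees B) ≤ 3 * ∑ T ∈ G.subtrees B, #T)
    {k : ℕ} (hk : #A + k ≤ #(G.rootedSubtrees A r)) :
    (#S + 2) * #(G.subtrees S) + k * #(G.subtrees B) ≤ 3 * ∑ T ∈ G.subtrees S, #T := by
  have hAconn := h.isConnectedSet_left
  have hBconn := h.symm.isConnectedSet_left
  have meanA := card_add_one_mul_card_rootedSubtrees_le hacyc hAconn h.left_mem
  have meanB := card_add_one_mul_card_rootedSubtrees_le hacyc hBconn h.right_mem
  have countA := card_subtrees_le_sum_card_rootedSubtrees hacyc hAconn h.left_mem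
  have countB := card_subtrees_le_sum_card_rootedSubtrees hacyc hBconn h.right_mem
  have rootB := card_le_card_rootedSubtrees hacyc hBconn h.right_mem
  rw [← h.card_add_card, h.card_subtrees, h.sum_card_subtrees]
  nlinarith [Nat.mul_le_mul meanA (le_refl #(G.rootedSubtrees B w)),
    Nat.mul_le_mul countA rootB, Nat.mul_le_mul (le_refl #(G.rootedSubtrees A r)) meanB,
    Nat.mul_le_mul hk countB]

theorem card_add_two_mul_card_subtrees_le (hS : G.IsConnectedSet S) :
    (#S + 2) * #(G.subtrees S) ≤ 3 * ∑ T ∈ G.subtrees S, #T := by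
  obtain ⟨r, hr⟩ := hS.1
  refine IsConnectedSet.induction_on_split hacyc (fun r => ?_) (fun S A B r w h ihA ihB => ?_) hS hr
  · simp [subtrees_singleton]
  · simpa using h.card_add_two_mul_card_subtrees_add_le hacyc ihA ihB (k := 0)
      (by simpa using card_le_card_rootedSubtrees hacyc h.isConnectedSet_left h.left_mem)

theorem card_add_two_mul_card_subtrees_lt (hS : G.IsConnectedSet S) {x : V} (hx : x ∈ S)
    (hdeg : 3 ≤ G.degreeIn S x) :
    (#S + 2) * #(G.subtrees S) < 3 * ∑ T ∈ G.subtrees S, #T := by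
  obtain ⟨A, B, w, h⟩ :=
    exists_isEdgeSplit hacyc hS hx (by have := degreeIn_lt_card (G := G) hx; omega)
  have hB := h.symm.isConnectedSet_left
  have hA := card_lt_card_rootedSubtrees hacyc h.isConnectedSet_left h.left_mem
    (by have := h.degreeIn_left_add_one; omega)
  have := h.card_add_two_mul_card_subtrees_add_le hacyc
    (card_add_two_mul_card_subtrees_le hacyc h.isConnectedSet_left)
    (card_add_two_mul_card_subtrees_le hacyc hB) (k := 1) hA
  have : 0 < #(G.subtrees B) := card_pos.mpr ⟨B, mem_subtrees.mpr ⟨subset_rfl, hB⟩⟩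
  omega

lemma card_rootedSubtrees_of_degreeIn_le_two (hS : G.IsConnectedSet S) (hr : r ∈ S)
    (hr₁ : G.degreeIn S r ≤ 1) (hdeg : ∀ x ∈ S, G.degreeIn S x ≤ 2) :
    #(G.rootedSubtrees S r) = #S ∧ 2 * ∑ T ∈ G.rootedSubtrees S r, #T = #S * (#S + 1) := by
  revert hr₁ hdeg
  refine IsConnectedSet.induction_on_split hacyc (fun r => ?_) (fun S A B r w h _ ihB => ?_) hS hr
  · simp [rootedSubtrees_singleton]
  · intro hr₁ hdeg
    have hA : A = {r} := h.isConnectedSet_left.eq_singleton_of_degreeIn_eq_zero h.left_mem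
      (by have := h.degreeIn_left_add_one; omega)
    have hwB : G.degreeIn B w ≤ 1 := by
      have := h.symm.degreeIn_left_add_one
      have := hdeg w (h.symm.left_subset h.right_mem)
      omega
    obtain ⟨hNB, hSB⟩ := ihB hwB fun x hx =>
      (degreeIn_mono h.symm.left_subset x).trans (hdeg x (h.symm.left_subset hx))
    rw [← h.card_add_card, h.card_rootedSubtrees, h.sum_card_rootedSubtrees, hNB, hA,
      rootedSubtrees_singleton]
    simp only [Finset.card_singleton, sum_singleton]
    constructor <;> nlinarith

lemma card_subtrees_of_degreeIn_le_two (hS : G.IsConnectedSet S)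
    (hdeg : ∀ x ∈ S, G.degreeIn S x ≤ 2) :
    2 * #(G.subtrees S) = #S * (#S + 1) ∧
      6 * ∑ T ∈ G.subtrees S, #T = #S * (#S + 1) * (#S + 2) := by
  obtain ⟨r, hr⟩ := hS.1
  revert hdeg
  refine IsConnectedSet.induction_on_split hacyc (fun r => ?_) (fun S A B r w h ihA ihB => ?_) hS hr
  · simp [subtrees_singleton]
  · intro hdeg
    have hdegA x (hx : x ∈ A) : G.degreeIn A x ≤ 2 :=
      (degreeIn_mono h.left_subset x).trans (hdeg x (h.left_subset hx))
    have hdegB x (hx : x ∈ B) : G.degreeIn B x ≤ 2 :=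
      (degreeIn_mono h.symm.left_subset x).trans (hdeg x (h.symm.left_subset hx))
    have hrA : G.degreeIn A r ≤ 1 := by
      have := h.degreeIn_left_add_one
      have := hdeg r (h.left_subset h.left_mem)
      omega
    have hwB : G.degreeIn B w ≤ 1 := by
      have := h.symm.degreeIn_left_add_one
      have := hdeg w (h.symm.left_subset h.right_mem)
      omega
    obtain ⟨hNA, hSA⟩ :=
      card_rootedSubtrees_of_degreeIn_le_two hacyc h.isConnectedSet_left h.left_mem hrA hdegA
    obtain ⟨hNB, hSB⟩ :=
      card_rootedSubtrees_of_degreeIn_le_two hacyc h.symm.isConnectedSet_left h.right_mem hwB hdegB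
    obtain ⟨hMA, hTA⟩ := ihA hdegA
    obtain ⟨hMB, hTB⟩ := ihB hdegB
    rw [← h.card_add_card, h.card_subtrees, h.sum_card_subtrees, hNA, hNB]
    constructor <;> nlinarith

end Acyclic

lemma Walk.toSubgraph_le_induce_top_iff {s : Set V} {x y : V} (p : G.Walk x y) :
    p.toSubgraph ≤ (⊤ : G.Subgraph).induce s ↔ ∀ z ∈ p.support, z ∈ s :=
  ⟨fun hle _ hz => hle.1 (p.mem_verts_toSubgraph.mpr hz),
    fun h => p.toSubgraph_le_induce_support.trans (Subgraph.induce_mono_right h)⟩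

lemma isConnectedSet_iff_connected_induce :
    G.IsConnectedSet T ↔ ((⊤ : G.Subgraph).induce (T : Set V)).Connected := by
  rw [Subgraph.connected_iff_forall_exists_walk_subgraph]
  simp only [Subgraph.induce_verts, Walk.toSubgraph_le_induce_top_iff, Finset.coe_nonempty,
    Finset.mem_coe]
  exact and_congr Iff.rfl ⟨fun h _ _ hu hv => h _ hu _ hv, fun h _ hu _ hv => h hu hv⟩

lemma isSubtree_induce_iff (hacyc : G.IsAcyclic) :
    ((⊤ : G.Subgraph).induce (T : Set V)).IsSubtree ↔ G.IsConnectedSet T := by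
  rw [isConnectedSet_iff_connected_induce, Subgraph.connected_iff']
  exact ⟨fun h => h.2.1,
    fun h => ⟨(Subgraph.connected_iff'.mpr h).nonempty, h, hacyc.subgraph _⟩⟩

lemma Subgraph.IsSubtree.induce_verts_eq (hacyc : G.IsAcyclic) {H : G.Subgraph}
    (hH : H.IsSubtree) : (⊤ : G.Subgraph).induce H.verts = H := by
  refine Subgraph.ext rfl (funext₂ fun a b => propext ⟨fun ⟨ha, hb, hab⟩ => ?_,
    fun hab => ⟨H.edge_vert hab, H.edge_vert hab.symm, H.adj_sub hab⟩⟩)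
  -- a path of `H` from `a` to `b` is a path of `G`, so by acyclicity it is the edge `a b`
  obtain ⟨q⟩ := hH.2.1.preconnected ⟨a, ha⟩ ⟨b, hb⟩
  have hpath : (q.toPath.val.map H.hom).IsPath :=
    (Walk.isPath_map_iff_of_injective Subgraph.hom_injective).mpr q.toPath.prop
  have hlen : q.toPath.val.length = 1 := by
    have := congrArg (fun p : G.Path a b => p.val.length)
      ((hacyc.subsingleton_path a b).elim ⟨_, hpath⟩ (Path.singleton hab))
    exact (Walk.length_map _ _).symm.trans this
  exact Walk.adj_of_length_eq_one hlen

lemma setOf_isSubtree_eq_image [Fintype V] (hacyc : G.IsAcyclic) :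
    {H : G.Subgraph | H.IsSubtree} =
      (fun T : Finset V => (⊤ : G.Subgraph).induce (T : Set V)) '' ↑(G.subtrees univ) := by
  ext H
  simp only [Set.mem_ofPred_eq, Set.mem_image, Finset.mem_coe, mem_subtrees, Finset.subset_univ,
    true_and]
  constructor
  · intro hH
    have hverts : ((H.verts.toFinset : Finset V) : Set V) = H.verts := Set.coe_toFinset _
    refine ⟨H.verts.toFinset, ?_, by rw [hverts, hH.induce_verts_eq hacyc]⟩
    rw [← isSubtree_induce_iff hacyc, hverts, hH.induce_verts_eq hacyc]
    exact hH
  · rintro ⟨T, hT, rfl⟩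
    exact (isSubtree_induce_iff hacyc).mpr hT

lemma meanSubtreeOrder_eq [Fintype V] (hacyc : G.IsAcyclic) :
    G.meanSubtreeOrder = (∑ T ∈ G.subtrees univ, #T : ℝ) / #(G.subtrees univ) := by
  have hinj : Set.InjOn (fun T : Finset V => (⊤ : G.Subgraph).induce (T : Set V))
      ↑(G.subtrees univ) := fun _ _ _ _ hTT' =>
    Finset.coe_injective (congrArg Subgraph.verts hTT')
  rw [meanSubtreeOrder, setOf_isSubtree_eq_image hacyc, finsum_mem_image hinj,
    hinj.ncard_image, finsum_mem_coe_finset, Set.ncard_coe_finset]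
  simp

lemma degree_pathGraph_le_two {n : ℕ} (i : Fin n) : (pathGraph n).degree i ≤ 2 := by
  rw [← card_neighborFinset_eq_degree, ← card_map Fin.valEmbedding]
  refine (card_le_card fun m hm => ?_).trans (card_le_two (a := i.val - 1) (b := i.val + 1))
  obtain ⟨j, hj, rfl⟩ := Finset.mem_map.mp hm
  rw [mem_neighborFinset, pathGraph_adj] at hj
  simp only [Fin.valEmbedding_apply, Finset.mem_insert, Finset.mem_singleton]
  omega

lemma degree_le_two_of_iso_pathGraph [Fintype V] {n : ℕ} (e : G ≃g pathGraph n) (x : V) :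
    G.degree x ≤ 2 :=
  e.degree_eq x ▸ degree_pathGraph_le_two (e x)

lemma IsTree.exists_adj_dist_add_one (hG : G.IsTree) {ℓ v : V} (hv : v ≠ ℓ) :
    ∃ u, G.Adj u v ∧ G.dist ℓ u + 1 = G.dist ℓ v := by
  obtain ⟨p, hp⟩ := hG.connected.exists_walk_length_eq_dist v ℓ
  cases p with
  | nil => exact absurd rfl hv
  | cons hadj q =>
    refine ⟨_, hadj.symm, ?_⟩
    have := dist_le q
    rw [Walk.length_cons] at hp
    rw [dist_comm] at hp this
    rcases hG.dist_eq_dist_add_one_of_adj ℓ hadj with h | h <;> omega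

section DistFromLeaf

variable [Fintype V] (hG : G.IsTree) {ℓ : V} (hℓ : G.degree ℓ ≤ 1)
  (hdeg : ∀ x, G.degree x ≤ 2)
include hG hℓ hdeg

/-- The leaf `ℓ` has only one neighbour, and any other vertex spends one of its at most two
neighbours on the way back to `ℓ`. -/
lemma IsTree.eq_of_adj_of_dist_eq_add_one {x a b : V} (ha : G.Adj x a) (hb : G.Adj x b)
    (hda : G.dist ℓ a = G.dist ℓ x + 1) (hdb : G.dist ℓ b = G.dist ℓ x + 1) : a = b := by
  by_contra hab
  by_cases hx : x = ℓ
  · subst hx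
    have : 1 < G.degree x := by
      rw [← card_neighborFinset_eq_degree]
      exact one_lt_card.mpr ⟨a, by simpa using ha, b, by simpa using hb, hab⟩
    omega
  · obtain ⟨z, hz, hdz⟩ := hG.exists_adj_dist_add_one hx
    have : 2 < G.degree x := by
      rw [← card_neighborFinset_eq_degree]
      refine two_lt_card.mpr ⟨a, by simpa using ha, b, by simpa using hb, z,
        by simpa using hz.symm, hab, ?_, ?_⟩ <;> rintro rfl <;> omega
    exact absurd (hdeg x) (by omega)

lemma IsTree.dist_injective : Function.Injective (G.dist ℓ) := by
  intro u v huv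
  induction hk : G.dist ℓ u generalizing u v with
  | zero =>
    exact (hG.connected.dist_eq_zero_iff.mp hk).symm.trans
      (hG.connected.dist_eq_zero_iff.mp (huv.symm.trans hk))
  | succ k ih =>
    have hu : u ≠ ℓ := by rintro rfl; simp at hk
    have hv : v ≠ ℓ := by rintro rfl; rw [dist_self] at huv; omega
    obtain ⟨u', hu', hdu'⟩ := hG.exists_adj_dist_add_one hu
    obtain ⟨v', hv', hdv'⟩ := hG.exists_adj_dist_add_one hv
    obtain rfl : u' = v' := ih (u := u') (v := v') (by omega) (by omega)
    exact hG.eq_of_adj_of_dist_eq_add_one hℓ hdeg hu' hv' (by omega) (by omega)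

end DistFromLeaf

theorem IsTree.nonempty_iso_pathGraph [Fintype V] (hG : G.IsTree) (hdeg : ∀ x, G.degree x ≤ 2) :
    Nonempty (G ≃g pathGraph (Fintype.card V)) := by
  obtain ⟨ℓ, hℓ⟩ : ∃ ℓ, G.degree ℓ ≤ 1 := by
    rcases subsingleton_or_nontrivial V with hV | hV
    · obtain ⟨ℓ⟩ := hG.connected.nonempty
      exact ⟨ℓ, (degree_eq_zero_of_subsingleton (G := G) ℓ).le.trans zero_le_one⟩
    · obtain ⟨ℓ, h⟩ := hG.exists_vert_degree_one_of_nontrivial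
      exact ⟨ℓ, h.le⟩
  have hlt (v : V) : G.dist ℓ v < Fintype.card V := by
    obtain ⟨p, hp, hlen⟩ := hG.connected.exists_path_of_dist ℓ v
    exact hlen ▸ hp.length_lt
  have hinj := hG.dist_injective hℓ hdeg
  have hadj {u v : V} (h : G.dist ℓ u + 1 = G.dist ℓ v) : G.Adj u v := by
    obtain ⟨u', hu', hdu'⟩ :=
      hG.exists_adj_dist_add_one (ℓ := ℓ) (v := v) (by rintro rfl; simp at h)
    exact hinj (hdu'.trans h.symm |> Nat.succ_injective) ▸ hu'
  let f : V → Fin (Fintype.card V) := fun v => ⟨G.dist ℓ v, hlt v⟩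
  have hf : Function.Bijective f := (Fintype.bijective_iff_injective_and_card f).mpr
    ⟨fun u v h => hinj (congrArg Fin.val h), (Fintype.card_fin _).symm⟩
  refine ⟨⟨Equiv.ofBijective f hf, fun {u v} => ?_⟩⟩
  simp only [Equiv.ofBijective_apply, pathGraph_adj, f]
  refine ⟨fun h => h.elim hadj fun h => (hadj h).symm, fun h => ?_⟩
  rcases hG.dist_eq_dist_add_one_of_adj ℓ h with h | h
  exacts [.inr h.symm, .inl h.symm]

theorem IsTree.three_mul_sum_card_subtrees_eq_iff [Fintype V] (hG : G.IsTree) :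
    3 * ∑ T ∈ G.subtrees univ, #T = (Fintype.card V + 2) * #(G.subtrees univ) ↔
      Nonempty (G ≃g pathGraph (Fintype.card V)) := by
  have hS := isConnectedSet_univ hG.connected
  rw [← card_univ]
  constructor
  · intro heq
    refine hG.nonempty_iso_pathGraph fun x => ?_
    by_contra! hx
    have := card_add_two_mul_card_subtrees_lt hG.isAcyclic hS (mem_univ x)
      (by rw [degreeIn_univ]; omega)
    omega
  · rintro ⟨e⟩
    obtain ⟨hN, hsum⟩ := card_subtrees_of_degreeIn_le_two hG.isAcyclic hS fun x _ =>
      (degreeIn_univ x).trans_le (degree_le_two_of_iso_pathGraph e x)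
    nlinarith

end SimpleGraph

/-- Jamison's theorem: every tree of order `n` has mean subtree order at least `(n+2)/3`,
with equality if and only if the tree is a path. -/
theorem jamison_mean_subtree_order {V : Type*} [Fintype V] (G : SimpleGraph V)
    (hG : G.IsTree) :
    ((Fintype.card V : ℝ) + 2) / 3 ≤ G.meanSubtreeOrder ∧
      (G.meanSubtreeOrder = ((Fintype.card V : ℝ) + 2) / 3 ↔
        Nonempty (G ≃g SimpleGraph.pathGraph (Fintype.card V))) := by
  have hS := isConnectedSet_univ hG.connected
  have hle := card_add_two_mul_card_subtrees_le hG.isAcyclic hS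
  rw [Finset.card_univ] at hle
  have hN : (0 : ℝ) < (G.subtrees Finset.univ).card := by
    exact_mod_cast Finset.card_pos.mpr ⟨_, mem_subtrees.mpr ⟨subset_rfl, hS⟩⟩
  rw [meanSubtreeOrder_eq hG.isAcyclic, div_le_div_iff₀ (by norm_num) hN,
    div_eq_div_iff hN.ne' (by norm_num), ← hG.three_mul_sum_card_subtrees_eq_iff,
    mul_comm _ (3 : ℝ)]
  exact ⟨by exact_mod_cast hle, by norm_cast⟩
end
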